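/- Let ρ, ρ₁, ρ₂ be finite-dimensional unitary representations of SO(d), let C = C^{(ρ,ρ₁,ρ₂)} ∈ ℂ^{d_{ρ₁}d_{ρ₂} × d_ρ} be the block of a unitary Clebsch–Gordan matrix satisfying (ρ₁(R) ⊗ ρ₂(R)) C = C ρ(R) for all R ∈ SO(d), and for each 1 ≤ m ≤ d_ρ let C̃_m ∈ ℂ^{d_{ρ₂} × d_{ρ₁}} be defined by vec(C̃_m) = (C_{·,m})*. Suppose a filter K : ℤ^d → ℂ^{d_ρ × d_{ρ₁}} has rows [K(y)]_{m,·} = (1/N) Σ_{ρ₂} Σ_r w_r^{(ρ,ρ₁,ρ₂)} M_r^{(ρ₂)}(y)^T C̃_m^{(ρ,ρ₁,ρ₂)} for vectors M_r^{(ρ₂)}(y) ∈ ℂ^{d_{ρ₂}} and scalars w_r. Then for every R ∈ SO(d) and y, (1/N) Σ_{ρ₂} Σ_r w_r^{(ρ,ρ₁,ρ₂)} M_r^{(ρ₂)}(y)^T ρ₂(R)^T C̃_m^{(ρ,ρ₁,ρ₂)} = [ρ(R) K(y) ρ₁(R)†]_{m,·}. -/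

import Mathlib

/-!
The intertwining relation `(ρ₁ ⊗ ρ₂) C = C ρ`, multiplied by `1 ⊗ ρ₂ᴴ` on the left and `ρᴴ` on the
right, becomes `(1 ⊗ ρ₂ᴴ) C = (ρ₁ ⊗ 1) C ρᴴ` by unitarity. Conjugating entrywise and reshaping the
columns of `C` into the matrices `C̃_m`, this reads `ρ₂ᵀ C̃_m = Σ_{m'} ρ_{m m'} C̃_{m'} ρ₁ᴴ`.
Since a row of the filter depends linearly on the `C̃_m`, steering it by `ρ₂ᵀ` produces the row
`Σ_{m'} ρ_{m m'} K_{m'} ρ₁ᴴ` of `ρ K ρ₁ᴴ`.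
-/
open Matrix
open scoped Kronecker

/-- The determinant as a monoid homomorphism on the orthogonal group. -/
noncomputable def detHom (d : ℕ) : ↥(Matrix.orthogonalGroup (Fin d) ℝ) →* ℝ where
  toFun A := Matrix.det (A : Matrix (Fin d) (Fin d) ℝ)
  map_one' := by simp
  map_mul' A B := by simp

/-- The special orthogonal group `SO(d)`, as the kernel of the determinant on `O(d)`. -/
noncomputable def SOg (d : ℕ) : Subgroup ↥(Matrix.orthogonalGroup (Fin d) ℝ) :=
  MonoidHom.ker (detHom d)

namespace ClebschGordan

variable {𝕜 : Type*} [CommSemiring 𝕜]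

section Reshape

variable [StarRing 𝕜] {l n p : Type*} [Fintype l] [Fintype n]

/-- `reshape C q` is the paper's `C̃_q`: `vec (C̃_q) = (C_{·,q})*`, with `vec` column-major. -/
def reshape (C : Matrix (l × n) p 𝕜) (q : p) : Matrix n l 𝕜 :=
  fun j i => star (C (i, j) q)

theorem one_kronecker_conjTranspose_mul [Fintype p] [DecidableEq l] [DecidableEq n]
    [DecidableEq p] {A : Matrix l l 𝕜} {B : Matrix n n 𝕜} {C : Matrix (l × n) p 𝕜}
    {P : Matrix p p 𝕜} (hC : (A ⊗ₖ B) * C = C * P) (hB : Bᴴ * B = 1) (hP : P * Pᴴ = 1) :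
    ((1 : Matrix l l 𝕜) ⊗ₖ Bᴴ) * C = (A ⊗ₖ (1 : Matrix n n 𝕜)) * C * Pᴴ := by
  calc ((1 : Matrix l l 𝕜) ⊗ₖ Bᴴ) * C = ((1 : Matrix l l 𝕜) ⊗ₖ Bᴴ) * (C * P) * Pᴴ := by
        rw [Matrix.mul_assoc, Matrix.mul_assoc, hP, Matrix.mul_one]
    _ = (A ⊗ₖ (1 : Matrix n n 𝕜)) * C * Pᴴ := by
        rw [← hC, ← Matrix.mul_assoc, ← Matrix.mul_kronecker_mul, one_mul, hB]

theorem transpose_mul_reshape_apply [DecidableEq l] (B : Matrix n n 𝕜)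
    (C : Matrix (l × n) p 𝕜) (q : p) (j : n) (i : l) :
    (Bᵀ * reshape C q) j i = star ((((1 : Matrix l l 𝕜) ⊗ₖ Bᴴ) * C) (i, j) q) := by
  simp [Matrix.mul_apply, Fintype.sum_prod_type_right, Matrix.one_apply, reshape]

theorem reshape_mul_conjTranspose_apply [DecidableEq n] (A : Matrix l l 𝕜)
    (C : Matrix (l × n) p 𝕜) (q : p) (j : n) (i : l) :
    (reshape C q * Aᴴ) j i = star (((A ⊗ₖ (1 : Matrix n n 𝕜)) * C) (i, j) q) := by
  simp [Matrix.mul_apply, Fintype.sum_prod_type, Matrix.one_apply, reshape, mul_comm]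

theorem transpose_mul_reshape [Fintype p] [DecidableEq l] [DecidableEq n] [DecidableEq p]
    {A : Matrix l l 𝕜} {B : Matrix n n 𝕜} {C : Matrix (l × n) p 𝕜} {P : Matrix p p 𝕜}
    (hC : (A ⊗ₖ B) * C = C * P) (hB : Bᴴ * B = 1) (hP : P * Pᴴ = 1) (q : p) :
    Bᵀ * reshape C q = ∑ q', P q q' • (reshape C q' * Aᴴ) := by
  ext j i
  rw [transpose_mul_reshape_apply, one_kronecker_conjTranspose_mul hC hB hP, Matrix.mul_apply,
    star_sum, Matrix.sum_apply]
  simp only [Matrix.smul_apply, reshape_mul_conjTranspose_apply, Matrix.conjTranspose_apply,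
    star_mul', star_star, smul_eq_mul, mul_comm]

end Reshape

section FilterRow

variable {ι κ β δ γ : Type*} [Fintype ι] [Fintype β] [Fintype γ] {n : ι → Type*}
  [∀ k, Fintype (n k)]

def filterRow (s : Finset κ) (w : ι → κ → 𝕜) (v : ∀ k, κ → n k → 𝕜)
    (X : ∀ k, Matrix (n k) β 𝕜) : β → 𝕜 :=
  ∑ k, ∑ r ∈ s, w k r • (v k r ᵥ* X k : β → 𝕜)

theorem filterRow_sum_smul_mul (s : Finset κ) (w : ι → κ → 𝕜) (v : ∀ k, κ → n k → 𝕜)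
    (a : γ → 𝕜) (X : γ → ∀ k, Matrix (n k) β 𝕜) (A : Matrix β δ 𝕜) :
    filterRow s w v (fun k => ∑ g, a g • (X g k * A)) =
      ∑ g, a g • (filterRow s w v (X g) ᵥ* A) := by
  simp only [filterRow, Matrix.vecMul_sum, Matrix.vecMul_smul, ← Matrix.vecMul_vecMul,
    Matrix.sum_vecMul, Matrix.smul_vecMul, Finset.smul_sum]
  rw [Finset.sum_comm (s := (Finset.univ : Finset γ))]
  refine Finset.sum_congr rfl fun k _ => ?_
  rw [Finset.sum_comm (s := (Finset.univ : Finset γ))]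
  exact Finset.sum_congr rfl fun r _ => Finset.sum_congr rfl fun g _ => by rw [smul_comm]

end FilterRow

end ClebschGordan

open ClebschGordan

theorem stmt_16_general (d : ℕ) {a b : ℕ} {ι : Type*} [Fintype ι] (c : ι → ℕ)
    (ρ : ↥(SOg d) → Matrix (Fin a) (Fin a) ℂ)
    (ρ₁ : ↥(SOg d) → Matrix (Fin b) (Fin b) ℂ)
    (ρ₂ : ∀ k : ι, ↥(SOg d) → Matrix (Fin (c k)) (Fin (c k)) ℂ)
    (hρu : ∀ R, ρ R ∈ Matrix.unitaryGroup (Fin a) ℂ)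
    (hρ₂u : ∀ k R, ρ₂ k R ∈ Matrix.unitaryGroup (Fin (c k)) ℂ)
    (C : ∀ k : ι, Matrix (Fin b × Fin (c k)) (Fin a) ℂ)
    (hC : ∀ k R, (ρ₁ R ⊗ₖ ρ₂ k R) * C k = C k * ρ R)
    (n_r N : ℕ) (w : ι → ℕ → ℂ)
    (M : ∀ k : ι, ℕ → (Fin d → ℤ) → Fin (c k) → ℂ)
    (K : (Fin d → ℤ) → Matrix (Fin a) (Fin b) ℂ)
    (hK : ∀ (y : Fin d → ℤ) (m : Fin a) (i : Fin b),
      K y m i = (1 / (N : ℂ)) * ∑ k : ι, ∑ r ∈ Finset.range n_r,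
        w k r * ∑ j : Fin (c k), M k r y j * star (C k (i, j) m)) :
    ∀ (R : ↥(SOg d)) (y : Fin d → ℤ) (m : Fin a) (i : Fin b),
      (1 / (N : ℂ)) * ∑ k : ι, ∑ r ∈ Finset.range n_r,
          w k r * ∑ j : Fin (c k), ∑ j' : Fin (c k),
            M k r y j * ρ₂ k R j' j * star (C k (i, j') m) =
        (ρ R * K y * (ρ₁ R)ᴴ) m i := by
  intro R y m i
  have hKrow : ∀ m', K y m' =
      (1 / (N : ℂ)) • filterRow (Finset.range n_r) w (fun k r => M k r y)
        (fun k => reshape (C k) m') := fun m' => by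
    ext i'
    simp [hK, filterRow, Matrix.vecMul, dotProduct, reshape, Finset.sum_apply]
  have hP : ρ R * (ρ R)ᴴ = 1 := Matrix.mem_unitaryGroup_iff.mp (hρu R)
  have hB : ∀ k, (ρ₂ k R)ᴴ * ρ₂ k R = 1 := fun k => Matrix.mem_unitaryGroup_iff'.mp (hρ₂u k R)
  calc _ = ((1 / (N : ℂ)) • filterRow (Finset.range n_r) w (fun k r => M k r y)
          (fun k => (ρ₂ k R)ᵀ * reshape (C k) m)) i := by
        simp [filterRow, Matrix.vecMul, dotProduct, Matrix.mul_apply, reshape,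
          Finset.sum_apply, Finset.mul_sum, mul_assoc]
    _ = (∑ m', ρ R m m' • (K y m' ᵥ* (ρ₁ R)ᴴ)) i := by
        simp_rw [transpose_mul_reshape (hC _ R) (hB _) hP, filterRow_sum_smul_mul, hKrow,
          Matrix.smul_vecMul, Finset.smul_sum, smul_comm (1 / (N : ℂ))]
    _ = (ρ R * K y * (ρ₁ R)ᴴ) m i := by
        rw [Matrix.mul_apply_eq_vecMul, Matrix.mul_apply_eq_vecMul, Matrix.vecMul_eq_sum (ρ R m),
          Matrix.sum_vecMul]
        simp_rw [Matrix.smul_vecMul]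

/-- for unitary representations `ρ, ρ₁, ρ₂` of `SO(d)`, Clebsch–Gordan
blocks `C = C^{(ρ,ρ₁,ρ₂)}` intertwining `ρ₁ ⊗ ρ₂` with `ρ`, reshaped matrices `C̃_m`
with `vec(C̃_m) = (C_{·,m})*`, and a filter `K` whose rows are
`[K(y)]_{m,·} = (1/N) Σ_{ρ₂} Σ_r w_r M_r^{(ρ₂)}(y)ᵀ C̃_m`, steering the filter through
`ρ₂(R)ᵀ` coincides with conjugating the filter:
`(1/N) Σ_{ρ₂} Σ_r w_r M_r^{(ρ₂)}(y)ᵀ ρ₂(R)ᵀ C̃_m = [ρ(R) K(y) ρ₁(R)†]_{m,·}`. -/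
theorem stmt_16 (d : ℕ) {a b : ℕ} {ι : Type*} [Fintype ι] (c : ι → ℕ)
    (ρ : ↥(SOg d) → Matrix (Fin a) (Fin a) ℂ)
    (ρ₁ : ↥(SOg d) → Matrix (Fin b) (Fin b) ℂ)
    (ρ₂ : ∀ k : ι, ↥(SOg d) → Matrix (Fin (c k)) (Fin (c k)) ℂ)
    (hρ : ∀ R S, ρ (R * S) = ρ R * ρ S)
    (hρ₁ : ∀ R S, ρ₁ (R * S) = ρ₁ R * ρ₁ S)
    (hρ₂ : ∀ k R S, ρ₂ k (R * S) = ρ₂ k R * ρ₂ k S)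
    (hρu : ∀ R, ρ R ∈ Matrix.unitaryGroup (Fin a) ℂ)
    (hρ₁u : ∀ R, ρ₁ R ∈ Matrix.unitaryGroup (Fin b) ℂ)
    (hρ₂u : ∀ k R, ρ₂ k R ∈ Matrix.unitaryGroup (Fin (c k)) ℂ)
    (C : ∀ k : ι, Matrix (Fin b × Fin (c k)) (Fin a) ℂ)
    (hC : ∀ k R, (ρ₁ R ⊗ₖ ρ₂ k R) * C k = C k * ρ R)
    (hCu : ∀ k, (C k)ᴴ * C k = 1)
    (n_r N : ℕ) (w : ι → ℕ → ℂ)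
    (M : ∀ k : ι, ℕ → (Fin d → ℤ) → Fin (c k) → ℂ)
    (K : (Fin d → ℤ) → Matrix (Fin a) (Fin b) ℂ)
    (hK : ∀ (y : Fin d → ℤ) (m : Fin a) (i : Fin b),
      K y m i = (1 / (N : ℂ)) * ∑ k : ι, ∑ r ∈ Finset.range n_r,
        w k r * ∑ j : Fin (c k), M k r y j * star (C k (i, j) m)) :
    ∀ (R : ↥(SOg d)) (y : Fin d → ℤ) (m : Fin a) (i : Fin b),
      (1 / (N : ℂ)) * ∑ k : ι, ∑ r ∈ Finset.range n_r,
          w k r * ∑ j : Fin (c k), ∑ j' : Fin (c k),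
            M k r y j * ρ₂ k R j' j * star (C k (i, j') m) =
        (ρ R * K y * (ρ₁ R)ᴴ) m i :=
  stmt_16_general d c ρ ρ₁ ρ₂ hρu hρ₂u C hC n_r N w M K hK
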